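/- Let h ∈ L²(ℝ) and φ(x,y,t) := χ_{[0,2]}(x)χ_{[0,1]}(y)h(t). If the system of integer translates {T_r h : r ∈ ℤ} is a Riesz sequence in L²(ℝ) with bounds A/2 and B/2, then {L_{(2k,l,m)}φ : k,l,m ∈ ℤ} is a Riesz sequence in L²(ℝ³) with bounds A and B, and conversely. -/

import Mathlib

open MeasureTheory

/-- Heisenberg group multiplication on ℝ³. -/
noncomputable def Hmul (a b : ℝ × ℝ × ℝ) : ℝ × ℝ × ℝ :=
  (a.1 + b.1, a.2.1 + b.2.1, a.2.2 + b.2.2 + (b.1 * a.2.1 - b.2.1 * a.1) / 2)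

/-- Heisenberg group inverse. -/
noncomputable def Hinv (a : ℝ × ℝ × ℝ) : ℝ × ℝ × ℝ := (-a.1, -a.2.1, -a.2.2)

/-- Left translation on the Heisenberg group. -/
noncomputable def LtrC (a : ℝ × ℝ × ℝ) (f : ℝ × ℝ × ℝ → ℂ) : ℝ × ℝ × ℝ → ℂ :=
  fun p => f (Hmul (Hinv a) p)

/-- The lattice translate L_{(2k,l,m)} g. -/
noncomputable def latTr (g : ℝ × ℝ × ℝ → ℂ) (j : ℤ × ℤ × ℤ) : ℝ × ℝ × ℝ → ℂ :=
  LtrC ((2 * j.1 : ℝ), (j.2.1 : ℝ), (j.2.2 : ℝ)) g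

/-- {L_{(2k,l,m)} g} is a Riesz sequence (with some bounds A, B > 0). -/
def IsRieszSeq (g : ℝ × ℝ × ℝ → ℂ) : Prop :=
  ∃ A B : ℝ, 0 < A ∧ 0 < B ∧
    ∀ (F : Finset (ℤ × ℤ × ℤ)) (c : ℤ × ℤ × ℤ → ℂ),
      A * ∑ j ∈ F, ‖c j‖ ^ 2 ≤
          (∫ p : ℝ × ℝ × ℝ, ‖∑ j ∈ F, c j * latTr g j p‖ ^ 2) ∧
        (∫ p : ℝ × ℝ × ℝ, ‖∑ j ∈ F, c j * latTr g j p‖ ^ 2) ≤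
          B * ∑ j ∈ F, ‖c j‖ ^ 2

/-- φ(x,y,t) = χ_{[0,2]}(x) χ_{[0,1]}(y) h(t). -/
noncomputable def phiOfh (h : ℝ → ℂ) (p : ℝ × ℝ × ℝ) : ℂ :=
  ((Set.Icc (0 : ℝ) 2).indicator (fun _ => (1 : ℝ)) p.1 : ℝ) *
    ((Set.Icc (0 : ℝ) 1).indicator (fun _ => (1 : ℝ)) p.2.1 : ℝ) * h p.2.2

open Set
open scoped ENNReal

/-!
The cells `(2k, 2k + 2) × (l, l + 1)`, `k, l ∈ ℤ`, tile the `(x, y)`-plane up to a null set. Over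
the cell of `(k, l)` the only translates `L_{(2k,l,m)} φ` that do not vanish are those with this
`(k, l)`, and there `L_{(2k,l,m)} φ (x, y, t) = h (t + s - m)` with a shift `s` depending only on
`(x, y)`. Integrating in `t` first, translation invariance removes `s`, and the cell has area
`2`, so
  `‖∑ c (k, l, m) L_{(2k,l,m)} φ‖² = 2 ∑_{k,l} ‖∑_m c (k, l, m) T_m h‖²`.
Summing the one-dimensional Riesz bounds over `(k, l)` gives the bounds `A`, `B`; conversely,
coefficients supported on `k = l = 0` turn the bounds `A`, `B` back into `A / 2`, `B / 2`.
-/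

lemma lintegral_eq_tsum_setLIntegral_Ioo {c : ℝ} (hc : 0 < c) (f : ℝ → ℝ≥0∞) :
    ∫⁻ x, f x = ∑' k : ℤ, ∫⁻ x in Ioo (k * c) ((k + 1) * c), f x := by
  have hcover := iUnion_Ioc_add_zsmul hc (0 : ℝ)
  have hdisj := pairwise_disjoint_Ioc_add_zsmul (0 : ℝ) c
  simp only [zero_add, zsmul_eq_mul, Int.cast_add, Int.cast_one] at hcover hdisj
  rw [← setLIntegral_univ, ← hcover, lintegral_iUnion (fun _ => measurableSet_Ioc) hdisj]
  exact tsum_congr fun k => setLIntegral_congr Ioo_ae_eq_Ioc.symm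

lemma lintegral_prod_prod {α β γ : Type*} [MeasurableSpace α] [MeasurableSpace β]
    [MeasurableSpace γ] {μ : Measure α} {ν : Measure β} {ρ : Measure γ} [SFinite ν] [SFinite ρ]
    {f : α × β × γ → ℝ≥0∞} (hf : AEMeasurable f (μ.prod (ν.prod ρ))) :
    ∫⁻ p, f p ∂μ.prod (ν.prod ρ) = ∫⁻ x, ∫⁻ y, ∫⁻ z, f (x, y, z) ∂ρ ∂ν ∂μ := by
  rw [lintegral_prod f hf]
  exact lintegral_congr_ae (hf.aestronglyMeasurable.prodMk_left.mono fun x hx =>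
    lintegral_prod _ hx.aemeasurable)

lemma integral_norm_sq_eq_toReal_lintegral {α E : Type*} [MeasurableSpace α] {μ : Measure α}
    [NormedAddCommGroup E] {f : α → E} (hf : AEStronglyMeasurable f μ) :
    ∫ x, ‖f x‖ ^ 2 ∂μ = (∫⁻ x, ‖f x‖ₑ ^ 2 ∂μ).toReal := by
  rw [integral_eq_lintegral_of_nonneg_ae (.of_forall fun _ => by positivity)
    (hf.norm.aemeasurable.pow_const 2).aestronglyMeasurable]
  simp_rw [ENNReal.ofReal_pow (norm_nonneg _), ofReal_norm]

lemma MeasureTheory.MemLp.lintegral_enorm_sq_lt_top {α E : Type*} [MeasurableSpace α]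
    {μ : Measure α} [NormedAddCommGroup E] {f : α → E} (hf : MemLp f 2 μ) :
    ∫⁻ x, ‖f x‖ₑ ^ 2 ∂μ < ∞ := by
  simpa using lintegral_rpow_enorm_lt_top_of_eLpNorm_lt_top two_ne_zero ENNReal.ofNat_ne_top
    hf.eLpNorm_lt_top

lemma memLp_sum_mul_translate {p : ℝ≥0∞} {h : ℝ → ℂ} (hh : MemLp h p volume) (S : Finset ℤ)
    (a : ℤ → ℂ) : MemLp (fun t => ∑ m ∈ S, a m * h (t - m)) p volume :=
  memLp_finsetSum S fun m _ =>
    (hh.comp_measurePreserving (measurePreserving_sub_right volume (m : ℝ))).const_mul (a m)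

lemma measurePreserving_shear {α G : Type*} [MeasurableSpace α] [AddGroup G]
    [MeasurableSpace G] [MeasurableAdd₂ G] (μ : Measure α) [SFinite μ] (ν : Measure G) [SFinite ν]
    [ν.IsAddRightInvariant] {f : α → G} (hf : Measurable f) :
    MeasurePreserving (fun p : α × G => (p.1, p.2 + f p.1)) (μ.prod ν) (μ.prod ν) :=
  (MeasurePreserving.id μ).skew_product (g := fun x y => y + f x)
    (measurable_snd.add (hf.comp measurable_fst))
    (.of_forall fun x => map_add_right_eq_self ν (f x))

lemma indicator_Icc_sub_intCast_mul {c x : ℝ} {k₀ : ℤ} (hc : 0 < c)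
    (hx : x ∈ Ioo (k₀ * c) ((k₀ + 1) * c)) (k : ℤ) :
    (Icc 0 c).indicator (fun _ => (1 : ℝ)) (x - k * c) = if k = k₀ then 1 else 0 := by
  obtain ⟨hx₁, hx₂⟩ := hx
  split_ifs with hk
  · subst hk
    exact indicator_of_mem (show x - k * c ∈ Icc 0 c from ⟨by linarith, by linarith⟩) _
  refine indicator_of_notMem (s := Icc 0 c) (fun hmem => ?_) _
  obtain ⟨h₁, h₂⟩ := hmem
  rcases lt_or_gt_of_ne hk with hlt | hgt
  · have : (k : ℝ) + 1 ≤ k₀ := by exact_mod_cast hlt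
    nlinarith
  · have : (k₀ : ℝ) + 1 ≤ k := by exact_mod_cast hgt
    nlinarith

lemma measurePreserving_Hmul (a : ℝ × ℝ × ℝ) : MeasurePreserving (Hmul a) volume volume := by
  have shear : MeasurePreserving
      (fun p : ℝ × ℝ × ℝ => (p.1, p.2.1, p.2.2 + (p.1 * a.2.1 - p.2.1 * a.1) / 2)) := by
    refine (MeasurePreserving.id volume).skew_product
      (g := fun x (q : ℝ × ℝ) => (q.1, q.2 + (x * a.2.1 - q.1 * a.1) / 2)) (by fun_prop)
      (.of_forall fun x => ?_)
    exact (measurePreserving_shear volume volume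
      (f := fun y => (x * a.2.1 - y * a.1) / 2) (by fun_prop)).map_eq
  have translate := (measurePreserving_add_left volume a.1).prod
    (measurePreserving_add_left volume a.2)
  have hcomp : Hmul a = Prod.map (a.1 + ·) (a.2 + ·) ∘
      fun p : ℝ × ℝ × ℝ => (p.1, p.2.1, p.2.2 + (p.1 * a.2.1 - p.2.1 * a.1) / 2) := by
    ext p <;>
      simp only [Hmul, Function.comp_apply, Prod.map_apply, Prod.fst_add, Prod.snd_add, add_assoc]
  rw [hcomp]
  exact translate.comp shear

lemma latTr_phiOfh_apply (h : ℝ → ℂ) (j : ℤ × ℤ × ℤ) (x y t : ℝ) :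
    latTr (phiOfh h) j (x, y, t) =
      (((Icc 0 2).indicator (fun _ => (1 : ℝ)) (x - j.1 * 2) : ℝ) : ℂ) *
        (((Icc 0 1).indicator (fun _ => (1 : ℝ)) (y - j.2.1) : ℝ) : ℂ) *
        h (t + (j.1 * 2 * y - j.2.1 * x) / 2 - j.2.2) := by
  simp only [latTr, LtrC, Hmul, Hinv, phiOfh]
  ring_nf

lemma aestronglyMeasurable_latTr_phiOfh {h : ℝ → ℂ} (hh : AEStronglyMeasurable h volume)
    (j : ℤ × ℤ × ℤ) : AEStronglyMeasurable (latTr (phiOfh h) j) volume := by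
  have hind (c : ℝ) :
      Measurable fun x : ℝ => (((Icc 0 c).indicator (fun _ => (1 : ℝ)) x : ℝ) : ℂ) :=
    (measurable_const.indicator measurableSet_Icc).complex_ofReal
  have hφ : AEStronglyMeasurable (phiOfh h) volume :=
    (((hind 2).comp measurable_fst).mul ((hind 1).comp measurable_snd.fst)).aestronglyMeasurable.mul
      (hh.comp_quasiMeasurePreserving
        (Measure.quasiMeasurePreserving_snd.comp Measure.quasiMeasurePreserving_snd))
  exact hφ.comp_measurePreserving (measurePreserving_Hmul _)

noncomputable def centralFiber (F : Finset (ℤ × ℤ × ℤ)) (q : ℤ × ℤ) : Finset ℤ :=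
  F.preimage (fun m => (q.1, q.2, m))
    ((Prod.mk_right_injective q.1).comp (Prod.mk_right_injective q.2)).injOn

lemma centralFiber_eq_empty {F : Finset (ℤ × ℤ × ℤ)} {q : ℤ × ℤ}
    (hq : ∀ j ∈ F, (j.1, j.2.1) ≠ q) : centralFiber F q = ∅ :=
  Finset.eq_empty_of_forall_notMem fun _ hm => hq _ (Finset.mem_preimage.mp hm) rfl

lemma sum_eq_sum_sum_centralFiber {M : Type*} [AddCommMonoid M] (F : Finset (ℤ × ℤ × ℤ))
    {Q : Finset (ℤ × ℤ)} (hQ : ∀ j ∈ F, (j.1, j.2.1) ∈ Q) (f : ℤ × ℤ × ℤ → M) :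
    ∑ j ∈ F, f j = ∑ q ∈ Q, ∑ m ∈ centralFiber F q, f (q.1, q.2, m) := by
  classical
  rw [← Finset.sum_fiberwise_of_maps_to hQ]
  refine Finset.sum_congr rfl fun q _ => ?_
  rw [centralFiber, Finset.sum_preimage' _ _ _ f]
  refine Finset.sum_congr (Finset.filter_congr fun j _ => ?_) fun _ _ => rfl
  constructor
  · rintro rfl
    exact ⟨j.2.2, rfl⟩
  · rintro ⟨m, rfl⟩
    rfl

lemma sum_latTr_phiOfh_apply_of_mem {x y : ℝ} {k l : ℤ}
    (hx : x ∈ Ioo ((k : ℝ) * 2) ((k + 1) * 2)) (hy : y ∈ Ioo (l : ℝ) (l + 1)) (h : ℝ → ℂ)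
    (F : Finset (ℤ × ℤ × ℤ)) (c : ℤ × ℤ × ℤ → ℂ) (t : ℝ) :
    ∑ j ∈ F, c j * latTr (phiOfh h) j (x, y, t) =
      ∑ m ∈ centralFiber F (k, l), c (k, l, m) * h (t + (k * 2 * y - l * x) / 2 - m) := by
  have hx' := indicator_Icc_sub_intCast_mul two_pos hx
  have hy' (l' : ℤ) :
      (Icc 0 1).indicator (fun _ => (1 : ℝ)) (y - l') = if l' = l then 1 else 0 := by
    simpa using indicator_Icc_sub_intCast_mul one_pos (k₀ := l) (by simpa using hy) l'
  rw [sum_eq_sum_sum_centralFiber F (Q := insert (k, l) (F.image fun j => (j.1, j.2.1)))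
    (fun j hj => Finset.mem_insert_of_mem (Finset.mem_image_of_mem _ hj)),
    Finset.sum_eq_single_of_mem (k, l) (Finset.mem_insert_self _ _)]
  · refine Finset.sum_congr rfl fun m _ => ?_
    simp [latTr_phiOfh_apply, hx', hy']
  · rintro ⟨k', l'⟩ _ hq
    refine Finset.sum_eq_zero fun m _ => ?_
    simp only [latTr_phiOfh_apply, hx', hy']
    split_ifs with h₁ h₂ <;> simp_all

lemma lintegral_sum_latTr_phiOfh_apply_of_mem {x y : ℝ} {k l : ℤ}
    (hx : x ∈ Ioo ((k : ℝ) * 2) ((k + 1) * 2)) (hy : y ∈ Ioo (l : ℝ) (l + 1)) (h : ℝ → ℂ)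
    (F : Finset (ℤ × ℤ × ℤ)) (c : ℤ × ℤ × ℤ → ℂ) :
    ∫⁻ t, ‖∑ j ∈ F, c j * latTr (phiOfh h) j (x, y, t)‖ₑ ^ 2 =
      ∫⁻ t, ‖∑ m ∈ centralFiber F (k, l), c (k, l, m) * h (t - m)‖ₑ ^ 2 := by
  simp_rw [sum_latTr_phiOfh_apply_of_mem hx hy]
  exact lintegral_add_right_eq_self
    (fun t => ‖∑ m ∈ centralFiber F (k, l), c (k, l, m) * h (t - m)‖ₑ ^ 2) _

lemma lintegral_sum_latTr_phiOfh {h : ℝ → ℂ} (hh : AEStronglyMeasurable h volume)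
    (F : Finset (ℤ × ℤ × ℤ)) (c : ℤ × ℤ × ℤ → ℂ) :
    ∫⁻ p, ‖∑ j ∈ F, c j * latTr (phiOfh h) j p‖ₑ ^ 2 =
      ∑' q : ℤ × ℤ, 2 * ∫⁻ t, ‖∑ m ∈ centralFiber F q, c (q.1, q.2, m) * h (t - m)‖ₑ ^ 2 := by
  set J : ℤ × ℤ → ℝ≥0∞ := fun q =>
    ∫⁻ t, ‖∑ m ∈ centralFiber F q, c (q.1, q.2, m) * h (t - m)‖ₑ ^ 2
  have hS : AEStronglyMeasurable (fun p => ∑ j ∈ F, c j * latTr (phiOfh h) j p) volume :=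
    Finset.aestronglyMeasurable_fun_sum _ fun j _ =>
      (aestronglyMeasurable_latTr_phiOfh hh j).const_mul _
  calc ∫⁻ p, ‖∑ j ∈ F, c j * latTr (phiOfh h) j p‖ₑ ^ 2
      = ∫⁻ x, ∫⁻ y, ∫⁻ t, ‖∑ j ∈ F, c j * latTr (phiOfh h) j (x, y, t)‖ₑ ^ 2 :=
        lintegral_prod_prod (hS.enorm.pow_const 2)
    _ = ∑' k : ℤ, ∫⁻ _ in Ioo ((k : ℝ) * 2) ((k + 1) * 2), ∑' l : ℤ, J (k, l) := by
        rw [lintegral_eq_tsum_setLIntegral_Ioo two_pos]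
        refine tsum_congr fun k => setLIntegral_congr_fun measurableSet_Ioo fun x hx => ?_
        rw [lintegral_eq_tsum_setLIntegral_Ioo one_pos]
        refine tsum_congr fun l => ?_
        rw [setLIntegral_congr_fun measurableSet_Ioo fun y hy =>
          lintegral_sum_latTr_phiOfh_apply_of_mem hx (by simpa using hy) h F c]
        simp [J]
    _ = ∑' q : ℤ × ℤ, 2 * J q := by
        have hlen : ∀ k : ℝ, (k + 1) * 2 - k * 2 = 2 := fun k => by ring
        simp only [setLIntegral_const, Real.volume_Ioo, hlen, ENNReal.ofReal_ofNat,
          ENNReal.tsum_mul_left, ENNReal.tsum_prod', mul_comm]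

lemma integral_sum_latTr_phiOfh {h : ℝ → ℂ} (hh : MemLp h 2 volume) (F : Finset (ℤ × ℤ × ℤ))
    (c : ℤ × ℤ × ℤ → ℂ) {Q : Finset (ℤ × ℤ)} (hQ : ∀ j ∈ F, (j.1, j.2.1) ∈ Q) :
    ∫ p, ‖∑ j ∈ F, c j * latTr (phiOfh h) j p‖ ^ 2 =
      ∑ q ∈ Q, 2 * ∫ t, ‖∑ m ∈ centralFiber F q, c (q.1, q.2, m) * h (t - m)‖ ^ 2 := by
  have hfiber (q : ℤ × ℤ) :=
    memLp_sum_mul_translate hh (centralFiber F q) fun m => c (q.1, q.2, m)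
  rw [integral_norm_sq_eq_toReal_lintegral (Finset.aestronglyMeasurable_fun_sum _ fun j _ =>
      (aestronglyMeasurable_latTr_phiOfh hh.aestronglyMeasurable j).const_mul _),
    lintegral_sum_latTr_phiOfh hh.aestronglyMeasurable, tsum_eq_sum (s := Q) fun q hq => ?_,
    ENNReal.toReal_sum fun q _ => ENNReal.mul_ne_top ENNReal.ofNat_ne_top
      (hfiber q).lintegral_enorm_sq_lt_top.ne]
  · refine Finset.sum_congr rfl fun q _ => ?_
    rw [ENNReal.toReal_mul, ENNReal.toReal_ofNat,
      integral_norm_sq_eq_toReal_lintegral (hfiber q).aestronglyMeasurable]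
  · rw [centralFiber_eq_empty (q := q) fun j hj hjq => hq (hjq ▸ hQ j hj)]
    simp

theorem riesz_iff_riesz_translates_general (h : ℝ → ℂ) (hh : MemLp h 2 (volume : Measure ℝ))
    (A B : ℝ) :
    -- {T_r h : r ∈ ℤ} is a Riesz sequence in L²(ℝ) with bounds A/2, B/2
    (∀ (F : Finset ℤ) (c : ℤ → ℂ),
        A / 2 * ∑ r ∈ F, ‖c r‖ ^ 2 ≤
            (∫ t : ℝ, ‖∑ r ∈ F, c r * h (t - r)‖ ^ 2) ∧
          (∫ t : ℝ, ‖∑ r ∈ F, c r * h (t - r)‖ ^ 2) ≤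
            B / 2 * ∑ r ∈ F, ‖c r‖ ^ 2) ↔
    -- iff {L_{(2k,l,m)}φ} is a Riesz sequence in L²(ℝ³) with bounds A, B
    (∀ (F : Finset (ℤ × ℤ × ℤ)) (c : ℤ × ℤ × ℤ → ℂ),
        A * ∑ j ∈ F, ‖c j‖ ^ 2 ≤
            (∫ p : ℝ × ℝ × ℝ, ‖∑ j ∈ F, c j * latTr (phiOfh h) j p‖ ^ 2) ∧
          (∫ p : ℝ × ℝ × ℝ, ‖∑ j ∈ F, c j * latTr (phiOfh h) j p‖ ^ 2) ≤
            B * ∑ j ∈ F, ‖c j‖ ^ 2) := by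
  constructor
  · intro H F c
    have hQ (j) (hj : j ∈ F) : (j.1, j.2.1) ∈ F.image fun j => (j.1, j.2.1) :=
      Finset.mem_image_of_mem _ hj
    rw [integral_sum_latTr_phiOfh hh F c hQ, sum_eq_sum_sum_centralFiber F hQ, Finset.mul_sum,
      Finset.mul_sum]
    constructor <;> refine Finset.sum_le_sum fun q _ => ?_
    · linarith [(H (centralFiber F q) fun m => c (q.1, q.2, m)).1]
    · linarith [(H (centralFiber F q) fun m => c (q.1, q.2, m)).2]
  · intro H F c
    set e : ℤ ↪ ℤ × ℤ × ℤ := ⟨fun m => (0, 0, m), fun _ _ hm => congrArg (·.2.2) hm⟩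
    have hQ (j) (hj : j ∈ F.map e) : (j.1, j.2.1) ∈ ({(0, 0)} : Finset (ℤ × ℤ)) := by
      obtain ⟨m, -, rfl⟩ := Finset.mem_map.mp hj
      exact Finset.mem_singleton_self _
    have hfiber : centralFiber (F.map e) (0, 0) = F := Finset.preimage_map e F
    obtain ⟨hlow, hup⟩ := H (F.map e) fun j => c j.2.2
    rw [integral_sum_latTr_phiOfh hh _ _ hQ, sum_eq_sum_sum_centralFiber _ hQ,
      Finset.sum_singleton, Finset.sum_singleton, hfiber] at hlow hup
    constructor <;> linarith

theorem riesz_iff_riesz_translates (h : ℝ → ℂ) (hh : MemLp h 2 (volume : Measure ℝ))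
    (A B : ℝ) (hA : 0 < A) (hB : 0 < B) :
    -- {T_r h : r ∈ ℤ} is a Riesz sequence in L²(ℝ) with bounds A/2, B/2
    (∀ (F : Finset ℤ) (c : ℤ → ℂ),
        A / 2 * ∑ r ∈ F, ‖c r‖ ^ 2 ≤
            (∫ t : ℝ, ‖∑ r ∈ F, c r * h (t - r)‖ ^ 2) ∧
          (∫ t : ℝ, ‖∑ r ∈ F, c r * h (t - r)‖ ^ 2) ≤
            B / 2 * ∑ r ∈ F, ‖c r‖ ^ 2) ↔
    -- iff {L_{(2k,l,m)}φ} is a Riesz sequence in L²(ℝ³) with bounds A, B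
    (∀ (F : Finset (ℤ × ℤ × ℤ)) (c : ℤ × ℤ × ℤ → ℂ),
        A * ∑ j ∈ F, ‖c j‖ ^ 2 ≤
            (∫ p : ℝ × ℝ × ℝ, ‖∑ j ∈ F, c j * latTr (phiOfh h) j p‖ ^ 2) ∧
          (∫ p : ℝ × ℝ × ℝ, ‖∑ j ∈ F, c j * latTr (phiOfh h) j p‖ ^ 2) ≤
            B * ∑ j ∈ F, ‖c j‖ ^ 2) :=
  riesz_iff_riesz_translates_general h hh A B
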